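/- Let f be a total colouring of G × K₂ with K₂ = {z₁, z₂}, let H be bipartite with parts X and Y, and let C be a matching in H. Then the colouring of G × H that assigns each vertex (v,x), x ∈ X, the colour f((v,z₁)); each vertex (v,y), y ∈ Y, the colour f((v,z₂)); and each edge (v,x)(v',y) with xy ∈ C the colour f((v,z₁)(v',z₂)), is a partial total colouring: no two adjacent vertices, no two incident coloured edges, and no coloured edge and its endpoint receive the same colour. -/

import Mathlib

open SimpleGraph

variable {V : Type*} {W : Type*}

/-- The direct (tensor) product of two simple graphs. -/
def tensorProd (G : SimpleGraph V) (H : SimpleGraph W) : SimpleGraph (V × W) where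
  Adj a b := G.Adj a.1 b.1 ∧ H.Adj a.2 b.2
  symm := ⟨fun _ _ h => ⟨G.adj_symm h.1, H.adj_symm h.2⟩⟩
  loopless := ⟨fun _ h => G.irrefl h.1⟩

instance tensorProd.adjDecidable (G : SimpleGraph V) (H : SimpleGraph W)
    [DecidableRel G.Adj] [DecidableRel H.Adj] : DecidableRel (tensorProd G H).Adj :=
  fun _ _ => instDecidableAnd

/-- A proper edge colouring with `n` colours, given as a symmetric function on adjacent pairs. -/
def IsEdgeColoring (G : SimpleGraph V) (n : ℕ) (ce : V → V → Fin n) : Prop :=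
  (∀ u v, G.Adj u v → ce u v = ce v u) ∧
  (∀ u v w, G.Adj u v → G.Adj u w → v ≠ w → ce u v ≠ ce u w)

/-- A proper total colouring with `n` colours. -/
def IsTotalColoring (G : SimpleGraph V) (n : ℕ) (cv : V → Fin n) (ce : V → V → Fin n) : Prop :=
  (∀ u v, G.Adj u v → ce u v = ce v u) ∧
  (∀ u v, G.Adj u v → cv u ≠ cv v) ∧
  (∀ u v w, G.Adj u v → G.Adj u w → v ≠ w → ce u v ≠ ce u w) ∧
  (∀ u v, G.Adj u v → ce u v ≠ cv u ∧ ce u v ≠ cv v)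

/-- The total chromatic number of a graph. -/
noncomputable def totalChromaticNumber (G : SimpleGraph V) : ℕ :=
  sInf {n | ∃ cv ce, IsTotalColoring G n cv ce}

/-- Adjacency of the crown graph. -/
def crownAdj {m : ℕ} : Fin m ⊕ Fin m → Fin m ⊕ Fin m → Prop
  | Sum.inl k, Sum.inr t => k ≠ t
  | Sum.inr k, Sum.inl t => k ≠ t
  | _, _ => False

/-- The crown graph `J_{2m}`: `K_{m,m}` minus a perfect matching. -/
def crown (m : ℕ) : SimpleGraph (Fin m ⊕ Fin m) where
  Adj := crownAdj
  symm := ⟨by rintro (k|k) (t|t) h <;> simp only [crownAdj] at * <;> exact fun e => h e.symm⟩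
  loopless := ⟨by rintro (k|k) h <;> simp only [crownAdj] at h⟩

instance crown.adjDecidable (m : ℕ) : DecidableRel (crown m).Adj := fun a b =>
  match a, b with
  | Sum.inl k, Sum.inr t => (inferInstance : Decidable (k ≠ t))
  | Sum.inr k, Sum.inl t => (inferInstance : Decidable (k ≠ t))
  | Sum.inl _, Sum.inl _ => isFalse (fun h => h)
  | Sum.inr _, Sum.inr _ => isFalse (fun h => h)

/-!
Place `G × H` over `G × K₂` by sending `(v, x)` to `(v, z₁)` or `(v, z₂)` according to the side of
`x`. Every edge of `H` joins the two sides, so adjacent vertices of `G × H` go to adjacent vertices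
of `G × K₂`; an edge `(v, x)(v', y)` with `xy ∈ C` goes to the edge `(v, z₁)(v', z₂)`, and two
matching edges that share exactly one endpoint go to two distinct edges sharing that endpoint,
because `C` is a matching. Properness of `f` then gives all three conditions.
-/

theorem tensorProd_top_adj_of_ne {G : SimpleGraph V} {v v' : V} (h : G.Adj v v') {i j : W}
    (hij : i ≠ j) : (tensorProd G (⊤ : SimpleGraph W)).Adj (v, i) (v', j) :=
  ⟨h, hij⟩

namespace IsTotalColoring

variable {G : SimpleGraph V} {nc : ℕ} {cv : V × Fin 2 → Fin nc}
  {ce : V × Fin 2 → V × Fin 2 → Fin nc}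

theorem vertex_ne_of_side_ne
    (hf : IsTotalColoring (tensorProd G (⊤ : SimpleGraph (Fin 2))) nc cv ce) {v v' : V}
    (h : G.Adj v v') {b b' : Bool} (hb : b ≠ b') :
    (if b then cv (v, 0) else cv (v, 1)) ≠ (if b' then cv (v', 0) else cv (v', 1)) := by
  cases b <;> cases b' <;> simp only [ne_eq, not_true_eq_false] at hb ⊢ <;>
    exact hf.2.1 _ _ (tensorProd_top_adj_of_ne h (by decide))

theorem edge_ne_of_left_eq
    (hf : IsTotalColoring (tensorProd G (⊤ : SimpleGraph (Fin 2))) nc cv ce) {v v' u' : V}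
    (h : G.Adj v v') (h' : G.Adj v u') (hne : v' ≠ u') :
    ce (v, 0) (v', 1) ≠ ce (v, 0) (u', 1) :=
  hf.2.2.1 _ _ _ (tensorProd_top_adj_of_ne h (by decide)) (tensorProd_top_adj_of_ne h' (by decide))
    (fun e => hne (congrArg Prod.fst e))

theorem edge_ne_of_right_eq
    (hf : IsTotalColoring (tensorProd G (⊤ : SimpleGraph (Fin 2))) nc cv ce) {v u v' : V}
    (h : G.Adj v v') (h' : G.Adj u v') (hne : v ≠ u) :
    ce (v, 0) (v', 1) ≠ ce (u, 0) (v', 1) := by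
  have a := tensorProd_top_adj_of_ne h (i := (0 : Fin 2)) (j := 1) (by decide)
  have a' := tensorProd_top_adj_of_ne h' (i := (0 : Fin 2)) (j := 1) (by decide)
  rw [hf.1 _ _ a, hf.1 _ _ a']
  exact hf.2.2.1 _ _ _ a.symm a'.symm (fun e => hne (congrArg Prod.fst e))

theorem edge_ne_endpoints
    (hf : IsTotalColoring (tensorProd G (⊤ : SimpleGraph (Fin 2))) nc cv ce) {v v' : V}
    (h : G.Adj v v') : ce (v, 0) (v', 1) ≠ cv (v, 0) ∧ ce (v, 0) (v', 1) ≠ cv (v', 1) :=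
  hf.2.2.2 _ _ (tensorProd_top_adj_of_ne h (by decide))

end IsTotalColoring

theorem partial_total_coloring_transfer {nc : ℕ} (G : SimpleGraph V) (H : SimpleGraph W)
    (cv : V × Fin 2 → Fin nc) (ce : V × Fin 2 → V × Fin 2 → Fin nc)
    (hf : IsTotalColoring (tensorProd G (⊤ : SimpleGraph (Fin 2))) nc cv ce)
    (side : W → Bool)
    (hside : ∀ x y, H.Adj x y → side x ≠ side y)
    (M : W → W → Prop)
    (hM : ∀ x y, M x y → H.Adj x y ∧ side x = true ∧ side y = false)
    (hMatch : ∀ x y x' y', M x y → M x' y' → (x = x' ↔ y = y')) :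
    (∀ v v' x y, G.Adj v v' → H.Adj x y →
        (if side x then cv (v, 0) else cv (v, 1)) ≠
          (if side y then cv (v', 0) else cv (v', 1))) ∧
    (∀ v v' u u' x y x' y', G.Adj v v' → G.Adj u u' → M x y → M x' y' →
        ((v, x) = (u, x') ∨ (v', y) = (u', y')) →
        ¬((v, x) = (u, x') ∧ (v', y) = (u', y')) →
        ce (v, 0) (v', 1) ≠ ce (u, 0) (u', 1)) ∧
    (∀ v v' x y, G.Adj v v' → M x y →
        ce (v, 0) (v', 1) ≠ (if side x then cv (v, 0) else cv (v, 1)) ∧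
        ce (v, 0) (v', 1) ≠ (if side y then cv (v', 0) else cv (v', 1))) := by
  refine ⟨fun v v' x y hG hH => hf.vertex_ne_of_side_ne hG (hside x y hH), ?_, ?_⟩
  · intro v v' u u' x y x' y' hG hG' hxy hxy' hshared hnot
    rcases hshared with hleft | hright
    · obtain ⟨rfl, rfl⟩ := Prod.mk.inj hleft
      have hy : y = y' := (hMatch _ _ _ _ hxy hxy').mp rfl
      exact hf.edge_ne_of_left_eq hG hG' fun hv' => hnot ⟨rfl, by rw [hv', hy]⟩
    · obtain ⟨rfl, rfl⟩ := Prod.mk.inj hright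
      have hx : x = x' := (hMatch _ _ _ _ hxy hxy').mpr rfl
      exact hf.edge_ne_of_right_eq hG hG' fun hv => hnot ⟨by rw [hv, hx], rfl⟩
  · intro v v' x y hG hxy
    obtain ⟨-, hx, hy⟩ := hM x y hxy
    simpa only [hx, hy, if_true, Bool.false_eq_true, if_false] using hf.edge_ne_endpoints hG
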